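/- Let $k > 0$, $n \ge 1$, and let $\{\omega_{ij}\}$ be the weights $\omega_{ij} = \beta(t_i - t_j)$ for $1 \le j \le i$ and $\omega_{i0} = 0$, where $\beta(t) = \gamma e^{-\delta t}$ with $\gamma, \delta > 0$ and $t_j = jk$. Then for every real vector $\phi = (\phi^0, \dots, \phi^n)$, the quadratic form is nonnegative: $k\sum_{i=1}^n \Big(k\sum_{j=0}^i \omega_{ij}\phi^j\Big)\phi^i \ge 0$. -/

import Mathlib

/-!
With `r = exp (-δ k) ∈ (0, 1]` the inner sums are `γ y_i`, where `y_i = ∑_{j ≤ i} r^(i-j) φ^j`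
obeys `y_i = r y_{i-1} + φ^i`. For `|r| ≤ 1` this gives `2 y_i φ^i ≥ y_i² - y_{i-1}²`, so the
quadratic form telescopes to at least `y_n² / 2 ≥ 0`.
-/

open Finset

noncomputable def discountedSum (r : ℝ) (φ : ℕ → ℝ) (i : ℕ) : ℝ :=
  ∑ j ∈ Icc 1 i, r ^ (i - j) * φ j

section

variable (r : ℝ) (φ : ℕ → ℝ)

@[simp]
theorem discountedSum_zero : discountedSum r φ 0 = 0 := by
  simp [discountedSum]

theorem discountedSum_succ (i : ℕ) :
    discountedSum r φ (i + 1) = r * discountedSum r φ i + φ (i + 1) := by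
  rw [discountedSum, sum_Icc_succ_top (by omega), discountedSum, mul_sum]
  congr 1
  · refine sum_congr rfl fun j hj => ?_
    rw [show i + 1 - j = i - j + 1 by grind, pow_succ]
    ring
  · simp

end

theorem sq_sub_sq_le_two_mul_mul_sub {r : ℝ} (hr : |r| ≤ 1) (a b : ℝ) :
    a ^ 2 - b ^ 2 ≤ 2 * a * (a - r * b) := by
  obtain ⟨hr₁, hr₂⟩ := abs_le.mp hr
  -- `a² - 2rab + b² = (1 - r)/2 (a + b)² + (1 + r)/2 (a - b)²`
  nlinarith [mul_nonneg (sub_nonneg.mpr hr₂) (sq_nonneg (a + b)),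
    mul_nonneg (neg_le_iff_add_nonneg.mp hr₁) (sq_nonneg (a - b))]

theorem sq_discountedSum_le {r : ℝ} (hr : |r| ≤ 1) (φ : ℕ → ℝ) (n : ℕ) :
    discountedSum r φ n ^ 2 ≤ 2 * ∑ i ∈ Icc 1 n, discountedSum r φ i * φ i := by
  induction n with
  | zero => simp
  | succ n ih =>
    have hstep := sq_sub_sq_le_two_mul_mul_sub hr (discountedSum r φ (n + 1)) (discountedSum r φ n)
    rw [discountedSum_succ r φ n, add_sub_cancel_left] at hstep
    rw [sum_Icc_succ_top (by omega), discountedSum_succ]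
    linarith

theorem sum_discountedSum_mul_nonneg {r : ℝ} (hr : |r| ≤ 1) (φ : ℕ → ℝ) (n : ℕ) :
    0 ≤ ∑ i ∈ Icc 1 n, discountedSum r φ i * φ i := by
  nlinarith [sq_discountedSum_le hr φ n, sq_nonneg (discountedSum r φ n)]

theorem exp_neg_mul_sub_eq_pow (δ k : ℝ) {i j : ℕ} (hji : j ≤ i) :
    Real.exp (-δ * ((i : ℝ) * k - (j : ℝ) * k)) = Real.exp (-(δ * k)) ^ (i - j) := by
  rw [← Real.exp_nat_mul, Nat.cast_sub hji]
  ring_nf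

theorem sum_exp_kernel_mul_eq (γ δ k : ℝ) (φ : ℕ → ℝ) (i : ℕ) :
    ∑ j ∈ Icc 1 i, γ * Real.exp (-δ * ((i : ℝ) * k - (j : ℝ) * k)) * φ j
      = γ * discountedSum (Real.exp (-(δ * k))) φ i := by
  rw [discountedSum, mul_sum]
  refine sum_congr rfl fun j hj => ?_
  rw [exp_neg_mul_sub_eq_pow δ k (mem_Icc.mp hj).2]
  ring

theorem stmt_14_general (γ δ k : ℝ) (hγ : 0 < γ) (hδ : 0 < δ) (hk : 0 < k)
    (n : ℕ) (φ : ℕ → ℝ) :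
    0 ≤ k * ∑ i ∈ Finset.Icc 1 n,
        (k * ∑ j ∈ Finset.Icc 1 i,
          γ * Real.exp (-δ * ((i : ℝ) * k - (j : ℝ) * k)) * φ j) * φ i := by
  have hr : |Real.exp (-(δ * k))| ≤ 1 := by
    rw [abs_of_pos (Real.exp_pos _), Real.exp_le_one_iff, neg_nonpos]
    positivity
  simp_rw [sum_exp_kernel_mul_eq, mul_assoc, ← mul_sum]
  have hsum := sum_discountedSum_mul_nonneg hr φ n
  positivity

/-- Positivity of the right rectangle rule for the exponential kernel. -/
theorem stmt_14 (γ δ k : ℝ) (hγ : 0 < γ) (hδ : 0 < δ) (hk : 0 < k)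
    (n : ℕ) (hn : 1 ≤ n) (φ : ℕ → ℝ) :
    0 ≤ k * ∑ i ∈ Finset.Icc 1 n,
        (k * ∑ j ∈ Finset.Icc 1 i,
          γ * Real.exp (-δ * ((i : ℝ) * k - (j : ℝ) * k)) * φ j) * φ i :=
  stmt_14_general γ δ k hγ hδ hk n φ
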